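/- The Killing vector fields Q^i_j = x^i ∂_{x^j} − p_j ∂_{p_i}, X_k = ∂_{x^k}, and D^s = (x^s/2)Q + (1 − ½⟨x,p⟩)∂_{p_s} of the metric G̃ on P̃ satisfy the commutator relations [Q^i_j, Q^p_k] = δ^p_j Q^i_k − δ^i_k Q^p_j, [Q^i_j, X_s] = −δ^i_s X_j, [Q^i_j, D^s] = δ^s_j D^i, [D^i, D^j] = 0, [X_i, X_j] = 0, and [X_s, D^i] = ½ Q^i_s + ½ δ^i_s Q; moreover each of them is Hamiltonian for the symplectic form ω = Σ_{i=0}^n dp_i ∧ dx^i: for every point m ∈ P̃ and every w ∈ ℝ^{2n+2}, ω(Q^i_j(m), w) = d(−x^i p_j)(m)(w), ω(X_k(m), w) = d(−p_k)(m)(w), and ω(D^s(m), w) = d(x^s (1 − ½⟨x,p⟩))(m)(w). -/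

import Mathlib

/-!
`Q^i_j` and `Q` are linear and `X_k` is constant, so brackets among them reduce to compositions
of linear maps. `D^s` is quadratic, and its derivative involves `d⟨x,p⟩`, which vanishes along
`Q^i_j` and `Q` (they generate `(x, p) ↦ (A x, A⁻ᵀ p)`, which preserves the pairing) and equals
`x^s (1 - ½⟨x,p⟩)` along `D^s`. For the Hamiltonian identities, `ω(Q, ·) = -d⟨x,p⟩` and `ω(∂_{p_s}, ·) = dx^s`.
-/

abbrev Idx2 (n : ℕ) : Type := Fin (n + 1) ⊕ Fin (n + 1)
abbrev Pt2 (n : ℕ) : Type := Idx2 n → ℝ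

/-- Lie bracket of vector fields on `P̃`: `[U,V] = (DV)U - (DU)V`. -/
noncomputable def bkt (n : ℕ) (U V : Pt2 n → Pt2 n) : Pt2 n → Pt2 n := fun m =>
  fderiv ℝ V m (U m) - fderiv ℝ U m (V m)

/-- The constant symplectic form `ω(u,v) = Σ_i (u^{p_i} v^{x^i} - u^{x^i} v^{p_i})`. -/
noncomputable def omegaAp {n : ℕ} (u v : Pt2 n) : ℝ :=
  ∑ i, (u (Sum.inl i) * v (Sum.inr i) - u (Sum.inr i) * v (Sum.inl i))

/-- `X_k = ∂_{x^k}`. -/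
noncomputable def XsVF (n : ℕ) (s : Fin (n + 1)) : Pt2 n → Pt2 n :=
  fun _ => Pi.single (Sum.inr s) 1

/-- `Q^i_j = x^i ∂_{x^j} - p_j ∂_{p_i}`. -/
noncomputable def QijVF (n : ℕ) (i j : Fin (n + 1)) : Pt2 n → Pt2 n := fun m =>
  m (Sum.inr i) • (Pi.single (Sum.inr j) 1 : Pt2 n) -
    m (Sum.inl j) • (Pi.single (Sum.inl i) 1 : Pt2 n)

/-- `Q = Σ_s (x^s ∂_{x^s} - p_s ∂_{p_s})`. -/
noncomputable def QVF (n : ℕ) : Pt2 n → Pt2 n := fun m a =>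
  match a with
  | Sum.inl l => -m (Sum.inl l)
  | Sum.inr l => m (Sum.inr l)

/-- `D^s = (x^s/2) Q + (1 - ½⟨x,p⟩) ∂_{p_s}`. -/
noncomputable def DiVF (n : ℕ) (s : Fin (n + 1)) : Pt2 n → Pt2 n := fun m =>
  (m (Sum.inr s) / 2) • QVF n m +
    (1 - (1 / 2 : ℝ) * ∑ l, m (Sum.inr l) * m (Sum.inl l)) •
      (Pi.single (Sum.inl s) 1 : Pt2 n)

open Sum

section LinearFields

variable {E F : Type*} [NormedAddCommGroup E] [NormedSpace ℝ E] [FiniteDimensional ℝ E]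
  [NormedAddCommGroup F] [NormedSpace ℝ F] {f : E → F}

lemma IsLinearMap.hasFDerivAt (hf : IsLinearMap ℝ f) (m : E) :
    HasFDerivAt f (LinearMap.toContinuousLinearMap (IsLinearMap.mk' f hf)) m :=
  (LinearMap.toContinuousLinearMap (IsLinearMap.mk' f hf)).hasFDerivAt

lemma IsLinearMap.fderiv_apply (hf : IsLinearMap ℝ f) (m v : E) : fderiv ℝ f m v = f v := by
  rw [(hf.hasFDerivAt m).fderiv]
  rfl

end LinearFields

noncomputable def xpPair {n : ℕ} (m : Pt2 n) : ℝ := ∑ l, m (inr l) * m (inl l)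

section Components

variable {n : ℕ} (m : Pt2 n) (a : Fin (n + 1))

@[simp] lemma QijVF_inl (i j : Fin (n + 1)) :
    QijVF n i j m (inl a) = if a = i then -m (inl j) else 0 := by
  by_cases h : a = i <;> simp [QijVF, h]

@[simp] lemma QijVF_inr (i j : Fin (n + 1)) :
    QijVF n i j m (inr a) = if a = j then m (inr i) else 0 := by
  simp [QijVF, Pi.single_apply]

@[simp] lemma XsVF_inl (s : Fin (n + 1)) : XsVF n s m (inl a) = 0 := by
  simp [XsVF]

@[simp] lemma XsVF_inr (s : Fin (n + 1)) : XsVF n s m (inr a) = if a = s then 1 else 0 := by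
  simp [XsVF, Pi.single_apply]

@[simp] lemma QVF_inl : QVF n m (inl a) = -m (inl a) := rfl

@[simp] lemma QVF_inr : QVF n m (inr a) = m (inr a) := rfl

@[simp] lemma DiVF_inl (s : Fin (n + 1)) : DiVF n s m (inl a) =
    -(m (inr s) / 2 * m (inl a)) + if a = s then 1 - 1 / 2 * xpPair m else 0 := by
  by_cases h : a = s <;> simp [DiVF, xpPair, h]

@[simp] lemma DiVF_inr (s : Fin (n + 1)) :
    DiVF n s m (inr a) = m (inr s) / 2 * m (inr a) := by
  simp [DiVF]

end Components

lemma isLinearMap_QijVF (n : ℕ) (i j : Fin (n + 1)) : IsLinearMap ℝ (QijVF n i j) := by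
  constructor <;> intros <;> ext (a | a) <;>
    simp only [QijVF_inl, QijVF_inr, Pi.add_apply, Pi.smul_apply, smul_eq_mul, mul_ite, mul_zero] <;>
    split_ifs <;> ring

lemma isLinearMap_QVF (n : ℕ) : IsLinearMap ℝ (QVF n) := by
  constructor <;> intros <;> ext (a | a) <;>
    simp only [QVF_inl, QVF_inr, Pi.add_apply, Pi.smul_apply, smul_eq_mul] <;> ring

section Derivatives

variable {n : ℕ}

lemma DiVF_eq (s : Fin (n + 1)) : DiVF n s = fun m =>
    (m (inr s) / 2) • QVF n m + (1 - (1 / 2 : ℝ) * xpPair m) • (Pi.single (inl s) 1 : Pt2 n) :=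
  rfl

lemma differentiable_xpPair : Differentiable ℝ (xpPair (n := n)) := by
  unfold xpPair; fun_prop

lemma fderiv_xpPair_apply (m v : Pt2 n) :
    fderiv ℝ xpPair m v = ∑ l, (m (inr l) * v (inl l) + m (inl l) * v (inr l)) := by
  have h : HasFDerivAt xpPair _ m :=
    HasFDerivAt.fun_sum (A := fun l (m : Pt2 n) => m (inr l) * m (inl l)) fun l _ =>
      (hasFDerivAt_apply (𝕜 := ℝ) (inr l) m).mul (hasFDerivAt_apply (𝕜 := ℝ) (inl l) m)
  simp [h.fderiv]

lemma hasFDerivAt_one_sub_half_xpPair (m : Pt2 n) :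
    HasFDerivAt (fun m' : Pt2 n => 1 - (1 / 2 : ℝ) * xpPair m')
      (-((1 / 2 : ℝ) • fderiv ℝ xpPair m)) m :=
  ((differentiable_xpPair m).hasFDerivAt.const_mul _).const_sub 1

@[simp] lemma fderiv_QijVF_apply (i j : Fin (n + 1)) (m v : Pt2 n) :
    fderiv ℝ (QijVF n i j) m v = QijVF n i j v :=
  (isLinearMap_QijVF n i j).fderiv_apply m v

@[simp] lemma fderiv_XsVF (s : Fin (n + 1)) (m : Pt2 n) : fderiv ℝ (XsVF n s) m = 0 :=
  fderiv_const_apply _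

lemma fderiv_DiVF_apply (s : Fin (n + 1)) (m v : Pt2 n) :
    fderiv ℝ (DiVF n s) m v = (v (inr s) / 2) • QVF n m + (m (inr s) / 2) • QVF n v -
      ((1 / 2 : ℝ) * fderiv ℝ xpPair m v) • (Pi.single (inl s) 1 : Pt2 n) := by
  have hcoord : HasFDerivAt (fun m : Pt2 n => m (inr s) / 2) _ m :=
    (hasFDerivAt_apply (𝕜 := ℝ) (inr s) m).mul_const (2⁻¹ : ℝ)
  have h : HasFDerivAt (DiVF n s) _ m := (hcoord.smul ((isLinearMap_QVF n).hasFDerivAt m)).add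
    ((hasFDerivAt_one_sub_half_xpPair m).smul_const (Pi.single (inl s) 1 : Pt2 n))
  rw [h.fderiv]
  simp only [add_apply, smul_apply, ContinuousLinearMap.smulRight_apply, neg_apply,
    LinearMap.coe_toContinuousLinearMap', IsLinearMap.mk'_apply, ContinuousLinearMap.proj_apply,
    smul_eq_mul]
  module

@[simp] lemma fderiv_xpPair_QijVF (i j : Fin (n + 1)) (m : Pt2 n) :
    fderiv ℝ xpPair m (QijVF n i j m) = 0 := by
  simp only [fderiv_xpPair_apply, QijVF_inl, QijVF_inr, mul_ite, mul_zero, Finset.sum_add_distrib,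
    Finset.sum_ite_eq', Finset.mem_univ, if_true]
  ring

@[simp] lemma fderiv_xpPair_XsVF (s : Fin (n + 1)) (m : Pt2 n) :
    fderiv ℝ xpPair m (XsVF n s m) = m (inl s) := by
  simp [fderiv_xpPair_apply, mul_ite]

lemma fderiv_xpPair_QVF (m : Pt2 n) : fderiv ℝ xpPair m (QVF n m) = 0 := by
  simp only [fderiv_xpPair_apply, QVF_inl, QVF_inr]
  exact Finset.sum_eq_zero fun l _ => by ring

@[simp] lemma fderiv_xpPair_DiVF (s : Fin (n + 1)) (m : Pt2 n) :
    fderiv ℝ xpPair m (DiVF n s m) = m (inr s) * (1 - 1 / 2 * xpPair m) := by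
  rw [DiVF_eq, map_add, map_smul, map_smul, fderiv_xpPair_QVF, fderiv_xpPair_apply]
  simp [Pi.single_apply, mul_comm]

end Derivatives

section Brackets

variable {n : ℕ}

lemma bkt_QijVF_QijVF (i j p k : Fin (n + 1)) :
    bkt n (QijVF n i j) (QijVF n p k) = fun m =>
      (if p = j then (1 : ℝ) else 0) • QijVF n i k m -
        (if i = k then (1 : ℝ) else 0) • QijVF n p j m := by
  funext m; ext (a | a) <;> simp [bkt, ite_apply] <;> grind

lemma bkt_QijVF_XsVF (i j s : Fin (n + 1)) :
    bkt n (QijVF n i j) (XsVF n s) = fun m => -((if i = s then (1 : ℝ) else 0) • XsVF n j m) := by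
  funext m; ext (a | a) <;> simp [bkt, ite_apply, ← ite_and, and_comm]

lemma bkt_QijVF_DiVF (i j s : Fin (n + 1)) :
    bkt n (QijVF n i j) (DiVF n s) = fun m => (if s = j then (1 : ℝ) else 0) • DiVF n i m := by
  funext m; ext (a | a) <;> simp [bkt, fderiv_DiVF_apply] <;> grind

lemma bkt_DiVF_DiVF (i j : Fin (n + 1)) : bkt n (DiVF n i) (DiVF n j) = fun _ => 0 := by
  funext m
  ext (a | a) <;> simp [bkt, fderiv_DiVF_apply, Pi.single_apply]
  · split_ifs <;> ring
  · ring

lemma bkt_XsVF_XsVF (i j : Fin (n + 1)) : bkt n (XsVF n i) (XsVF n j) = fun _ => 0 := by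
  funext m; simp [bkt]

lemma bkt_XsVF_DiVF (s i : Fin (n + 1)) : bkt n (XsVF n s) (DiVF n i) = fun m =>
    (1 / 2 : ℝ) • QijVF n i s m + ((1 / 2 : ℝ) * if i = s then 1 else 0) • QVF n m := by
  funext m; ext (a | a) <;> simp [bkt, fderiv_DiVF_apply, ite_apply, Pi.single_apply] <;> grind

end Brackets

section Hamiltonians

variable {n : ℕ}

lemma omegaAp_add_left (u v w : Pt2 n) : omegaAp (u + v) w = omegaAp u w + omegaAp v w := by
  simp only [omegaAp, Pi.add_apply, ← Finset.sum_add_distrib]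
  exact Finset.sum_congr rfl fun _ _ => by ring

lemma omegaAp_smul_left (c : ℝ) (u w : Pt2 n) : omegaAp (c • u) w = c * omegaAp u w := by
  simp only [omegaAp, Pi.smul_apply, smul_eq_mul, Finset.mul_sum]
  exact Finset.sum_congr rfl fun _ _ => by ring

lemma omegaAp_single_inl (s : Fin (n + 1)) (w : Pt2 n) :
    omegaAp (Pi.single (inl s) 1) w = w (inr s) := by
  simp [omegaAp, Pi.single_apply]

lemma omegaAp_QVF (m w : Pt2 n) : omegaAp (QVF n m) w = -fderiv ℝ xpPair m w := by
  simp only [omegaAp, QVF_inl, QVF_inr, fderiv_xpPair_apply, ← Finset.sum_neg_distrib]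
  exact Finset.sum_congr rfl fun _ _ => by ring

lemma omegaAp_QijVF (i j : Fin (n + 1)) (m w : Pt2 n) :
    omegaAp (QijVF n i j m) w = fderiv ℝ (fun m' => -(m' (inr i) * m' (inl j))) m w := by
  have h : HasFDerivAt (fun m' : Pt2 n => -(m' (inr i) * m' (inl j))) _ m :=
    ((hasFDerivAt_apply (𝕜 := ℝ) (inr i) m).mul (hasFDerivAt_apply (𝕜 := ℝ) (inl j) m)).neg
  rw [h.fderiv]
  simp only [omegaAp, QijVF_inl, QijVF_inr, ite_mul, zero_mul, Finset.sum_sub_distrib,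
    Finset.sum_ite_eq', Finset.mem_univ, if_true, neg_apply, add_apply, smul_apply,
    ContinuousLinearMap.proj_apply, smul_eq_mul]
  ring

lemma omegaAp_XsVF (k : Fin (n + 1)) (m w : Pt2 n) :
    omegaAp (XsVF n k m) w = fderiv ℝ (fun m' => -m' (inl k)) m w := by
  have h : HasFDerivAt (fun m' : Pt2 n => -m' (inl k)) _ m :=
    (hasFDerivAt_apply (𝕜 := ℝ) (inl k) m).neg
  rw [h.fderiv]
  simp [omegaAp]

lemma omegaAp_DiVF (s : Fin (n + 1)) (m w : Pt2 n) :
    omegaAp (DiVF n s m) w = fderiv ℝ (fun m' => m' (inr s) *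
      (1 - (1 / 2 : ℝ) * ∑ l, m' (inr l) * m' (inl l))) m w := by
  have h : HasFDerivAt (fun m' : Pt2 n => m' (inr s) *
      (1 - (1 / 2 : ℝ) * ∑ l, m' (inr l) * m' (inl l))) _ m :=
    (hasFDerivAt_apply (𝕜 := ℝ) (inr s) m).mul (hasFDerivAt_one_sub_half_xpPair m)
  rw [h.fderiv, DiVF_eq, omegaAp_add_left, omegaAp_smul_left, omegaAp_smul_left, omegaAp_QVF,
    omegaAp_single_inl]
  simp only [xpPair, add_apply, neg_apply, smul_apply, smul_eq_mul,
    ContinuousLinearMap.proj_apply]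
  ring

end Hamiltonians

theorem killing_fields_commutators_and_hamiltonians_general (n : ℕ) :
    -- commutator relations
    (∀ i j p k : Fin (n + 1),
      bkt n (QijVF n i j) (QijVF n p k) = fun m =>
        (if p = j then (1 : ℝ) else 0) • QijVF n i k m -
          (if i = k then (1 : ℝ) else 0) • QijVF n p j m) ∧
    (∀ i j s : Fin (n + 1),
      bkt n (QijVF n i j) (XsVF n s) = fun m =>
        -((if i = s then (1 : ℝ) else 0) • XsVF n j m)) ∧
    (∀ i j s : Fin (n + 1),
      bkt n (QijVF n i j) (DiVF n s) = fun m =>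
        (if s = j then (1 : ℝ) else 0) • DiVF n i m) ∧
    (∀ i j : Fin (n + 1), bkt n (DiVF n i) (DiVF n j) = fun _ => 0) ∧
    (∀ i j : Fin (n + 1), bkt n (XsVF n i) (XsVF n j) = fun _ => 0) ∧
    (∀ s i : Fin (n + 1),
      bkt n (XsVF n s) (DiVF n i) = fun m =>
        (1 / 2 : ℝ) • QijVF n i s m +
          ((1 / 2 : ℝ) * if i = s then 1 else 0) • QVF n m) ∧
    -- Hamiltonian property
    (∀ (i j : Fin (n + 1)) (m w : Pt2 n),
      omegaAp (QijVF n i j m) w =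
        fderiv ℝ (fun m' => -(m' (Sum.inr i) * m' (Sum.inl j))) m w) ∧
    (∀ (k : Fin (n + 1)) (m w : Pt2 n),
      omegaAp (XsVF n k m) w = fderiv ℝ (fun m' => -m' (Sum.inl k)) m w) ∧
    (∀ (s : Fin (n + 1)) (m w : Pt2 n),
      omegaAp (DiVF n s m) w =
        fderiv ℝ (fun m' => m' (Sum.inr s) *
          (1 - (1 / 2 : ℝ) * ∑ l, m' (Sum.inr l) * m' (Sum.inl l))) m w) :=
  ⟨bkt_QijVF_QijVF, bkt_QijVF_XsVF, bkt_QijVF_DiVF, bkt_DiVF_DiVF, bkt_XsVF_XsVF, bkt_XsVF_DiVF,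
    omegaAp_QijVF, omegaAp_XsVF, omegaAp_DiVF⟩

theorem killing_fields_commutators_and_hamiltonians (n : ℕ) (hn : 1 ≤ n) :
    -- commutator relations
    (∀ i j p k : Fin (n + 1),
      bkt n (QijVF n i j) (QijVF n p k) = fun m =>
        (if p = j then (1 : ℝ) else 0) • QijVF n i k m -
          (if i = k then (1 : ℝ) else 0) • QijVF n p j m) ∧
    (∀ i j s : Fin (n + 1),
      bkt n (QijVF n i j) (XsVF n s) = fun m =>
        -((if i = s then (1 : ℝ) else 0) • XsVF n j m)) ∧
    (∀ i j s : Fin (n + 1),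
      bkt n (QijVF n i j) (DiVF n s) = fun m =>
        (if s = j then (1 : ℝ) else 0) • DiVF n i m) ∧
    (∀ i j : Fin (n + 1), bkt n (DiVF n i) (DiVF n j) = fun _ => 0) ∧
    (∀ i j : Fin (n + 1), bkt n (XsVF n i) (XsVF n j) = fun _ => 0) ∧
    (∀ s i : Fin (n + 1),
      bkt n (XsVF n s) (DiVF n i) = fun m =>
        (1 / 2 : ℝ) • QijVF n i s m +
          ((1 / 2 : ℝ) * if i = s then 1 else 0) • QVF n m) ∧
    -- Hamiltonian property
    (∀ (i j : Fin (n + 1)) (m w : Pt2 n),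
      omegaAp (QijVF n i j m) w =
        fderiv ℝ (fun m' => -(m' (Sum.inr i) * m' (Sum.inl j))) m w) ∧
    (∀ (k : Fin (n + 1)) (m w : Pt2 n),
      omegaAp (XsVF n k m) w = fderiv ℝ (fun m' => -m' (Sum.inl k)) m w) ∧
    (∀ (s : Fin (n + 1)) (m w : Pt2 n),
      omegaAp (DiVF n s m) w =
        fderiv ℝ (fun m' => m' (Sum.inr s) *
          (1 - (1 / 2 : ℝ) * ∑ l, m' (Sum.inr l) * m' (Sum.inl l))) m w) :=
  killing_fields_commutators_and_hamiltonians_general n
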